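/- arXiv:2001.01154 — 2 statements merged into one kernel-verified Lean document; each statement's English description precedes it below -/
import Mathlib

section
/- Angle–comparison-angle inequality, upper curvature bound (Corollary 3.2, curvature ≤ 0 case). Let X be a metric space, let U ⊆ X be a region of curvature ≤ 0, and let γ : [0,T] → X and η : [0,S] → X be unit-speed geodesics with γ(0) = η(0) whose images are contained in U. Then for all t ∈ (0, T] and s ∈ (0, S], ∠⁺(γ, η) ≤ ∠⁰_{γ(0)}(γ(t), η(s)). (By Lemma 3.1 the angle ∠(γ, η) exists and equals ∠⁺(γ, η).) -/
open Filter Topology Metric Set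

noncomputable section

/-- `γ` is a unit-speed geodesic (shortest path) on the interval `[0, T]`:
the distance between any two of its points equals the parameter difference. -/
def IsUnitSpeedGeodesicOn {X : Type*} [MetricSpace X] (γ : ℝ → X) (T : ℝ) : Prop :=
  ∀ t ∈ Set.Icc (0:ℝ) T, ∀ t' ∈ Set.Icc (0:ℝ) T, dist (γ t) (γ t') = |t - t'|

/-- The Euclidean comparison angle `∠⁰_p(x, y)` at the vertex `p`. -/
def compAngle {X : Type*} [MetricSpace X] (p x y : X) : ℝ :=
  Real.arccos ((dist p x ^ 2 + dist p y ^ 2 - dist x y ^ 2) /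
    (2 * dist p x * dist p y))

/-- The upper angle `∠⁺(γ, η)` between two geodesics with `γ 0 = η 0`:
the limsup of comparison angles `∠⁰_{γ 0}(γ t, η s)` as `(t, s) → (0⁺, 0⁺)`. -/
def upperAngle {X : Type*} [MetricSpace X] (γ η : ℝ → X) : ℝ :=
  Filter.limsup (fun ts : ℝ × ℝ => compAngle (γ 0) (γ ts.1) (η ts.2))
    ((𝓝[>] (0:ℝ)) ×ˢ (𝓝[>] (0:ℝ)))

/-- The lower angle `∠⁻(γ, η)`: liminf of comparison angles. -/
def lowerAngle {X : Type*} [MetricSpace X] (γ η : ℝ → X) : ℝ :=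
  Filter.liminf (fun ts : ℝ × ℝ => compAngle (γ 0) (γ ts.1) (η ts.2))
    ((𝓝[>] (0:ℝ)) ×ˢ (𝓝[>] (0:ℝ)))

/-- `U` is a region of curvature bounded by `0` in the comparison sense, where
`rel` is `≤` (curvature `≤ 0`) or `≥` (curvature `≥ 0`): any two points of `U`
are joined by a unit-speed shortest path with image in `U`, and for every
geodesic triangle contained in `U` and every Euclidean comparison triangle,
distances between pairs of points on the sides are related by `rel` to the
distances between the corresponding comparison points. -/
def IsCurvRegion {X : Type*} [MetricSpace X] (rel : ℝ → ℝ → Prop) (U : Set X) : Prop :=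
  (∀ x ∈ U, ∀ y ∈ U, ∃ γ : ℝ → X, IsUnitSpeedGeodesicOn γ (dist x y) ∧
    γ 0 = x ∧ γ (dist x y) = y ∧ ∀ t ∈ Set.Icc (0:ℝ) (dist x y), γ t ∈ U) ∧
  (∀ x ∈ U, ∀ y ∈ U, ∀ z ∈ U, ∀ p : Fin 3 → ℝ → X,
    (∀ i, IsUnitSpeedGeodesicOn (p i) (![dist x y, dist x z, dist y z] i) ∧
      p i 0 = (![(x, y), (x, z), (y, z)] i).1 ∧
      p i (![dist x y, dist x z, dist y z] i) = (![(x, y), (x, z), (y, z)] i).2 ∧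
      ∀ t ∈ Set.Icc (0:ℝ) (![dist x y, dist x z, dist y z] i), p i t ∈ U) →
    ∀ xb yb zb : EuclideanSpace ℝ (Fin 2),
      dist xb yb = dist x y → dist xb zb = dist x z → dist yb zb = dist y z →
      ∀ i j : Fin 3, ∀ a b : ℝ,
        a ∈ Set.Icc (0:ℝ) (![dist x y, dist x z, dist y z] i) →
        b ∈ Set.Icc (0:ℝ) (![dist x y, dist x z, dist y z] j) →
        rel (dist (p i a) (p j b))
          (dist
            (![fun c : ℝ => AffineMap.lineMap xb yb (c / dist x y),
               fun c : ℝ => AffineMap.lineMap xb zb (c / dist x z),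
               fun c : ℝ => AffineMap.lineMap yb zb (c / dist y z)] i a)
            (![fun c : ℝ => AffineMap.lineMap xb yb (c / dist x y),
               fun c : ℝ => AffineMap.lineMap xb zb (c / dist x z),
               fun c : ℝ => AffineMap.lineMap yb zb (c / dist y z)] j b)))

/-- A region of curvature `≤ 0`. -/
def IsCurvLeRegion {X : Type*} [MetricSpace X] (U : Set X) : Prop :=
  IsCurvRegion (· ≤ ·) U

/-- A region of curvature `≥ 0`. -/
def IsCurvGeRegion {X : Type*} [MetricSpace X] (U : Set X) : Prop :=
  IsCurvRegion (· ≥ ·) U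

end

/-!
Let `0 < t' ≤ t` and `0 < s' ≤ s`. Place a Euclidean comparison triangle on `γ 0`, `γ t`, `η s`.
The curvature condition, applied to the points `γ t'` and `η s'` on the two sides through `γ 0`,
bounds `dist (γ t') (η s')` by the distance of the corresponding points of the comparison triangle,
which span the same Euclidean angle at the vertex. Since the comparison angle grows with the
opposite side, `∠⁰(γ t', η s') ≤ ∠⁰(γ t, η s)`, and this bound passes to the limsup.
-/

open EuclideanGeometry

section Euclidean

variable {V P : Type*} [NormedAddCommGroup V] [InnerProductSpace ℝ V] [MetricSpace P]
  [NormedAddTorsor V P]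

theorem compAngle_eq_angle {p x y : P} (hx : x ≠ p) (hy : y ≠ p) :
    compAngle p x y = ∠ x p y := by
  have hx' : 0 < dist x p := dist_pos.2 hx
  have hy' : 0 < dist y p := dist_pos.2 hy
  unfold compAngle
  rw [dist_comm p x, dist_comm p y, sq, sq, sq, law_cos x p y]
  rw [show dist x p * dist x p + dist y p * dist y p -
      (dist x p * dist x p + dist y p * dist y p -
        2 * dist x p * dist y p * Real.cos (∠ x p y)) =
      (2 * dist x p * dist y p) * Real.cos (∠ x p y) by ring,
    mul_div_cancel_left₀ _ (by positivity)]
  exact Real.arccos_cos (angle_nonneg _ _ _) (angle_le_pi _ _ _)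

theorem angle_lineMap_lineMap (p x y : P) {r r' : ℝ} (hr : 0 < r) (hr' : 0 < r') :
    ∠ (AffineMap.lineMap p x r) p (AffineMap.lineMap p y r') = ∠ x p y := by
  simp only [EuclideanGeometry.angle, AffineMap.lineMap_vsub_left,
    InnerProductGeometry.angle_smul_left_of_pos _ _ hr,
    InnerProductGeometry.angle_smul_right_of_pos _ _ hr']

theorem compAngle_lineMap_lineMap {p x y : P} (hx : x ≠ p) (hy : y ≠ p) {r r' : ℝ} (hr : 0 < r)
    (hr' : 0 < r') :
    compAngle p (AffineMap.lineMap p x r) (AffineMap.lineMap p y r') = compAngle p x y := by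
  rw [compAngle_eq_angle hx hy, compAngle_eq_angle, angle_lineMap_lineMap p x y hr hr']
  all_goals simp [AffineMap.lineMap_eq_left_iff, hx.symm, hy.symm, hr.ne', hr'.ne']

theorem EuclideanSpace.dist_eq_fin_two (a b c d : ℝ) :
    dist !₂[a, b] !₂[c, d] = √((a - c) ^ 2 + (b - d) ^ 2) := by
  simp [EuclideanSpace.dist_eq, Fin.sum_univ_two, Real.dist_eq, sq_abs]

theorem exists_euclideanPlane_triangle {a b c : ℝ} (ha : 0 ≤ a) (hb : 0 ≤ b) (hab : c ≤ a + b)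
    (hc : |a - b| ≤ c) :
    ∃ x y z : EuclideanSpace ℝ (Fin 2), dist x y = a ∧ dist x z = b ∧ dist y z = c := by
  have hc0 : 0 ≤ c := (abs_nonneg _).trans hc
  have hc2 : (a - b) ^ 2 ≤ c ^ 2 := by
    simpa only [sq_abs] using pow_le_pow_left₀ (abs_nonneg _) hc 2
  have hc2' : c ^ 2 ≤ (a + b) ^ 2 := pow_le_pow_left₀ hc0 hab 2
  -- `u = b cos θ` for the angle `θ` of the triangle at `x` (law of cosines)
  set u := (a ^ 2 + b ^ 2 - c ^ 2) / (2 * a)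
  have hu : 2 * a * u = a ^ 2 + b ^ 2 - c ^ 2 ∧ u ^ 2 ≤ b ^ 2 := by
    rcases ha.eq_or_lt with rfl | ha
    · simp only [u, mul_zero, div_zero]
      constructor <;> nlinarith
    · have hau : 2 * a * u = a ^ 2 + b ^ 2 - c ^ 2 := mul_div_cancel₀ _ (by positivity)
      refine ⟨hau, ?_⟩
      have : (2 * a * u) ^ 2 ≤ (2 * a * b) ^ 2 := by
        rw [hau]
        nlinarith [mul_nonneg (sub_nonneg.2 hc2) (sub_nonneg.2 hc2')]
      nlinarith [mul_pos ha ha]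
  obtain ⟨hau, hub⟩ := hu
  have hv : √(b ^ 2 - u ^ 2) ^ 2 = b ^ 2 - u ^ 2 := Real.sq_sqrt (sub_nonneg.2 hub)
  refine ⟨!₂[0, 0], !₂[a, 0], !₂[u, √(b ^ 2 - u ^ 2)], ?_, ?_, ?_⟩ <;>
    rw [EuclideanSpace.dist_eq_fin_two, Real.sqrt_eq_iff_eq_sq (by positivity) (by assumption)]
  · ring
  · linear_combination hv
  · linear_combination hv - hau

end Euclidean

section Metric

variable {X : Type*} [MetricSpace X]

theorem IsUnitSpeedGeodesicOn.mono {γ : ℝ → X} {T T' : ℝ} (h : IsUnitSpeedGeodesicOn γ T)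
    (hT' : T' ≤ T) : IsUnitSpeedGeodesicOn γ T' :=
  fun a ha b hb => h a ⟨ha.1, ha.2.trans hT'⟩ b ⟨hb.1, hb.2.trans hT'⟩

theorem IsUnitSpeedGeodesicOn.dist_zero {γ : ℝ → X} {T t : ℝ} (h : IsUnitSpeedGeodesicOn γ T)
    (ht : t ∈ Icc 0 T) : dist (γ 0) (γ t) = t := by
  rw [h 0 ⟨le_rfl, ht.1.trans ht.2⟩ t ht, zero_sub, abs_neg, abs_of_nonneg ht.1]

theorem compAngle_le_compAngle {Y : Type*} [MetricSpace Y] {p x y : X} {p' x' y' : Y}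
    (hx : dist p x = dist p' x') (hy : dist p y = dist p' y') (hxy : dist x y ≤ dist x' y') :
    compAngle p x y ≤ compAngle p' x' y' := by
  unfold compAngle
  rw [← hx, ← hy]
  apply Real.arccos_le_arccos
  gcongr

theorem upperAngle_le_of_eventually {γ η : ℝ → X} {c : ℝ}
    (h : ∀ᶠ ts in 𝓝[>] (0:ℝ) ×ˢ 𝓝[>] (0:ℝ), compAngle (γ 0) (γ ts.1) (η ts.2) ≤ c) :
    upperAngle γ η ≤ c :=
  limsup_le_of_le (isCoboundedUnder_le_of_le _ fun _ => Real.arccos_nonneg _) h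

theorem exists_comparison_triangle (x y z : X) :
    ∃ xb yb zb : EuclideanSpace ℝ (Fin 2),
      dist xb yb = dist x y ∧ dist xb zb = dist x z ∧ dist yb zb = dist y z :=
  exists_euclideanPlane_triangle dist_nonneg dist_nonneg (dist_triangle_left y z x)
    (by rw [dist_comm x y, dist_comm x z]; exact abs_dist_sub_le y z x)

theorem IsCurvLeRegion.dist_le_of_hinge {U : Set X} (hU : IsCurvLeRegion U) {γ η : ℝ → X}
    {t s : ℝ} (hγ : IsUnitSpeedGeodesicOn γ t) (hη : IsUnitSpeedGeodesicOn η s)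
    (hγη : γ 0 = η 0) (hγU : ∀ a ∈ Icc 0 t, γ a ∈ U) (hηU : ∀ b ∈ Icc 0 s, η b ∈ U)
    {xb yb zb : EuclideanSpace ℝ (Fin 2)} (hxy : dist xb yb = t) (hxz : dist xb zb = s)
    (hyz : dist yb zb = dist (γ t) (η s)) {a b : ℝ} (ha : a ∈ Icc 0 t) (hb : b ∈ Icc 0 s) :
    dist (γ a) (η b) ≤
      dist (AffineMap.lineMap xb yb (a / t)) (AffineMap.lineMap xb zb (b / s)) := by
  have ht : t ∈ Icc 0 t := ⟨ha.1.trans ha.2, le_rfl⟩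
  have hs : s ∈ Icc 0 s := ⟨hb.1.trans hb.2, le_rfl⟩
  have hdt : dist (γ 0) (γ t) = t := hγ.dist_zero ht
  have hds : dist (γ 0) (η s) = s := hγη ▸ hη.dist_zero hs
  obtain ⟨g, hg⟩ := hU.1 _ (hγU t ht) _ (hηU s hs)
  have := hU.2 _ (hγU 0 ⟨le_rfl, ht.1⟩) _ (hγU t ht) _ (hηU s hs) ![γ, η, g] ?sides
    xb yb zb (hxy.trans hdt.symm) (hxz.trans hds.symm) hyz 0 1 a b
    (by simpa [hdt] using ha) (by simpa [hds] using hb)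
  · simpa [hdt, hds] using this
  case sides =>
    intro i
    fin_cases i
    · simp only [Fin.zero_eta, Matrix.cons_val_zero, hdt]
      exact ⟨hγ, trivial, trivial, hγU⟩
    · simp only [Fin.mk_one, Matrix.cons_val_one, Matrix.cons_val_zero, hds]
      exact ⟨hη, hγη.symm, trivial, hηU⟩
    · exact hg

theorem IsCurvLeRegion.compAngle_le {U : Set X} (hU : IsCurvLeRegion U) {γ η : ℝ → X}
    {t s : ℝ} (hγ : IsUnitSpeedGeodesicOn γ t) (hη : IsUnitSpeedGeodesicOn η s)
    (hγη : γ 0 = η 0) (hγU : ∀ a ∈ Icc 0 t, γ a ∈ U) (hηU : ∀ b ∈ Icc 0 s, η b ∈ U)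
    {a b : ℝ} (ha : a ∈ Ioc 0 t) (hb : b ∈ Ioc 0 s) :
    compAngle (γ 0) (γ a) (η b) ≤ compAngle (γ 0) (γ t) (η s) := by
  have ht : 0 < t := ha.1.trans_le ha.2
  have hs : 0 < s := hb.1.trans_le hb.2
  obtain ⟨xb, yb, zb, hxy, hxz, hyz⟩ := exists_comparison_triangle (γ 0) (γ t) (η s)
  rw [hγ.dist_zero ⟨ht.le, le_rfl⟩] at hxy
  rw [hγη, hη.dist_zero ⟨hs.le, le_rfl⟩] at hxz
  have hyx : yb ≠ xb := dist_pos.1 (by rw [dist_comm, hxy]; exact ht)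
  have hzx : zb ≠ xb := dist_pos.1 (by rw [dist_comm, hxz]; exact hs)
  calc compAngle (γ 0) (γ a) (η b)
      ≤ compAngle xb (AffineMap.lineMap xb yb (a / t)) (AffineMap.lineMap xb zb (b / s)) := by
        refine compAngle_le_compAngle ?_ ?_
          (hU.dist_le_of_hinge hγ hη hγη hγU hηU hxy hxz hyz (Ioc_subset_Icc_self ha)
            (Ioc_subset_Icc_self hb))
        · rw [dist_left_lineMap, hxy, Real.norm_of_nonneg (div_pos ha.1 ht).le,
            div_mul_cancel₀ _ ht.ne', hγ.dist_zero (Ioc_subset_Icc_self ha)]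
        · rw [dist_left_lineMap, hxz, Real.norm_of_nonneg (div_pos hb.1 hs).le,
            div_mul_cancel₀ _ hs.ne', hγη, hη.dist_zero (Ioc_subset_Icc_self hb)]
    _ = compAngle xb yb zb :=
        compAngle_lineMap_lineMap hyx hzx (div_pos ha.1 ht) (div_pos hb.1 hs)
    _ ≤ compAngle (γ 0) (γ t) (η s) := by
        refine compAngle_le_compAngle ?_ ?_ hyz.le
        · rw [hxy, hγ.dist_zero ⟨ht.le, le_rfl⟩]
        · rw [hxz, hγη, hη.dist_zero ⟨hs.le, le_rfl⟩]

end Metric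

theorem angle_le_compAngle_of_curvLe_general {X : Type*} [MetricSpace X]
    {U : Set X} (hU : IsCurvLeRegion U)
    {T S : ℝ}
    (γ η : ℝ → X)
    (hγ : IsUnitSpeedGeodesicOn γ T) (hη : IsUnitSpeedGeodesicOn η S)
    (hγη : γ 0 = η 0)
    (hγU : ∀ t ∈ Set.Icc (0:ℝ) T, γ t ∈ U)
    (hηU : ∀ s ∈ Set.Icc (0:ℝ) S, η s ∈ U) :
    ∀ t ∈ Set.Ioc (0:ℝ) T, ∀ s ∈ Set.Ioc (0:ℝ) S,
      upperAngle γ η ≤ compAngle (γ 0) (γ t) (η s) := by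
  intro t ht s hs
  apply upperAngle_le_of_eventually
  filter_upwards [prod_mem_prod (Ioc_mem_nhdsGT ht.1) (Ioc_mem_nhdsGT hs.1)] with ⟨a, b⟩ ⟨ha, hb⟩
  exact hU.compAngle_le (hγ.mono ht.2) (hη.mono hs.2) hγη
    (fun a ha => hγU a ⟨ha.1, ha.2.trans ht.2⟩) (fun b hb => hηU b ⟨hb.1, hb.2.trans hs.2⟩) ha hb

/-- Corollary 3.2, curvature `≤ 0` case: the angle is at most any
comparison angle. -/
theorem angle_le_compAngle_of_curvLe {X : Type*} [MetricSpace X]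
    {U : Set X} (hU : IsCurvLeRegion U)
    {T S : ℝ} (hT : 0 < T) (hS : 0 < S)
    (γ η : ℝ → X)
    (hγ : IsUnitSpeedGeodesicOn γ T) (hη : IsUnitSpeedGeodesicOn η S)
    (hγη : γ 0 = η 0)
    (hγU : ∀ t ∈ Set.Icc (0:ℝ) T, γ t ∈ U)
    (hηU : ∀ s ∈ Set.Icc (0:ℝ) S, η s ∈ U) :
    ∀ t ∈ Set.Ioc (0:ℝ) T, ∀ s ∈ Set.Ioc (0:ℝ) S,
      upperAngle γ η ≤ compAngle (γ 0) (γ t) (η s) :=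
  angle_le_compAngle_of_curvLe_general hU γ η hγ hη hγη hγU hηU
end

section
/- Upper bound in the first variation formula for distance to a point (Lemma 4.1). Let X be a metric space, let γ : [0,T] → X (T > 0) be a unit-speed geodesic, and let p ∈ X with p ≠ γ(0). Suppose there exists at least one unit-speed shortest path from γ(0) to p, i.e. a unit-speed geodesic η : [0, dist(γ(0), p)] → X with η(0) = γ(0) and η(dist(γ(0), p)) = p. Let A := inf { ∠⁺(γ, η) : η a unit-speed shortest path from γ(0) to p }. Then limsup_{t→0⁺} (dist(γ(t), p) − dist(γ(0), p))/t ≤ −cos A. -/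
open Filter Topology Metric Set

/-!
Fix a shortest path `η` from `γ 0` to `p` and a small `s > 0`. The triangle inequality through
`η s` gives `dist (γ t) p ≤ dist (γ t) (η s) + dist (γ 0) p - s`, and the law of cosines for the
comparison angle `θ = ∠⁰_{γ 0}(γ t, η s)` gives `dist (γ t) (η s) ≤ s - t cos θ + t² / (2 s)`.
Hence the difference quotient is at most `-cos θ + t / (2 s)`. Choosing `s` so that `θ` stays
below `∠⁺(γ, η) + ε` for all small `t`, and letting `t → 0`, bounds the limsup by
`-cos ∠⁺(γ, η)`. Finally `-cos` is continuous, so the bound passes to the infimum over `η`.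
-/

open Real

theorem cos_sub_le_cos_of_lt_add {θ A ε : ℝ} (hθ : 0 ≤ θ) (hA : A ≤ π) (hε : 0 ≤ ε)
    (h : θ < A + ε) : cos A - ε ≤ cos θ := by
  rcases le_or_gt θ A with hθA | hAθ
  · linarith [cos_le_cos_of_nonneg_of_le_pi hθ hA hθA]
  · have := abs_cos_sub_cos_le A θ
    rw [abs_sub_comm A, abs_of_pos (sub_pos.2 hAθ)] at this
    linarith [le_abs_self (cos A - cos θ)]

namespace IsUnitSpeedGeodesicOn

variable {X : Type*} [MetricSpace X] {γ : ℝ → X} {T : ℝ}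

theorem dist_eq_sub (hγ : IsUnitSpeedGeodesicOn γ T) {s t : ℝ} (hs : 0 ≤ s) (hst : s ≤ t)
    (ht : t ≤ T) : dist (γ s) (γ t) = t - s := by
  rw [hγ s ⟨hs, hst.trans ht⟩ t ⟨hs.trans hst, ht⟩, abs_sub_comm,
    abs_of_nonneg (sub_nonneg.2 hst)]

theorem dist_zero_eq (hγ : IsUnitSpeedGeodesicOn γ T) {t : ℝ} (ht : t ∈ Icc 0 T) :
    dist (γ 0) (γ t) = t := by
  simpa using hγ.dist_eq_sub le_rfl ht.1 ht.2

theorem neg_one_le_dist_sub_div (hγ : IsUnitSpeedGeodesicOn γ T) (p : X) {t : ℝ}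
    (ht : t ∈ Ioc 0 T) : -1 ≤ (dist (γ t) p - dist (γ 0) p) / t := by
  rw [le_div_iff₀ ht.1]
  linarith [dist_triangle (γ 0) (γ t) p, hγ.dist_zero_eq (Ioc_subset_Icc_self ht)]

end IsUnitSpeedGeodesicOn

section compAngle

variable {X : Type*} [MetricSpace X] {p x y : X}

theorem cos_compAngle (hx : x ≠ p) (hy : y ≠ p) :
    cos (compAngle p x y) =
      (dist p x ^ 2 + dist p y ^ 2 - dist x y ^ 2) / (2 * dist p x * dist p y) := by
  have hpos : 0 < 2 * dist p x * dist p y := by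
    have := dist_pos.2 hx.symm
    have := dist_pos.2 hy.symm
    positivity
  have hupper : dist x y ≤ dist p x + dist p y := dist_triangle_left x y p
  have hlower : |dist p x - dist p y| ≤ dist x y := by
    simpa only [dist_comm p] using abs_dist_sub_le x y p
  have hlower' := abs_le.1 hlower
  rw [compAngle, cos_arccos]
  · rw [le_div_iff₀ hpos]
    nlinarith [dist_nonneg (x := x) (y := y)]
  · rw [div_le_one hpos]
    nlinarith

theorem dist_sq_eq_compAngle (hx : x ≠ p) (hy : y ≠ p) :
    dist x y ^ 2 =
      dist p x ^ 2 + dist p y ^ 2 - 2 * dist p x * dist p y * cos (compAngle p x y) := by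
  have := dist_ne_zero.2 hx.symm
  have := dist_ne_zero.2 hy.symm
  rw [cos_compAngle hx hy]
  field_simp
  ring

theorem dist_le_of_compAngle (hx : x ≠ p) (hy : y ≠ p) :
    dist x y ≤ dist p y - dist p x * cos (compAngle p x y) + dist p x ^ 2 / (2 * dist p y) := by
  set t := dist p x
  set s := dist p y
  set c := cos (compAngle p x y)
  have hs : 0 < s := dist_pos.2 hy.symm
  have ht : 0 ≤ t := dist_nonneg
  have hbound : 0 ≤ s - t * c + t ^ 2 / (2 * s) := by
    have : s - t + t ^ 2 / (2 * s) = ((s - t) ^ 2 + s ^ 2) / (2 * s) := by field_simp; ring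
    have : t * c ≤ t := mul_le_of_le_one_right ht (cos_le_one _)
    have : 0 ≤ ((s - t) ^ 2 + s ^ 2) / (2 * s) := by positivity
    linarith
  have hsq : (s - t * c + t ^ 2 / (2 * s)) ^ 2 - dist x y ^ 2 = (t * c - t ^ 2 / (2 * s)) ^ 2 := by
    rw [dist_sq_eq_compAngle hx hy]
    field_simp
    ring
  nlinarith [sq_nonneg (t * c - t ^ 2 / (2 * s)), dist_nonneg (x := x) (y := y)]

end compAngle

section upperAngle

variable {X : Type*} [MetricSpace X]

theorem upperAngle_nonneg (γ η : ℝ → X) : 0 ≤ upperAngle γ η :=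
  le_limsup_of_frequently_le (.of_forall fun _ => arccos_nonneg _)
    (isBoundedUnder_of ⟨π, fun _ => arccos_le_pi _⟩)

theorem upperAngle_le_pi (γ η : ℝ → X) : upperAngle γ η ≤ π :=
  limsup_le_of_le (isCoboundedUnder_le_of_le _ fun _ => arccos_nonneg _)
    (.of_forall fun _ => arccos_le_pi _)

theorem eventually_compAngle_lt_upperAngle_add (γ η : ℝ → X) {ε : ℝ} (hε : 0 < ε) :
    ∀ᶠ ts in (𝓝[>] (0:ℝ)) ×ˢ (𝓝[>] (0:ℝ)),
      compAngle (γ 0) (γ ts.1) (η ts.2) < upperAngle γ η + ε :=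
  eventually_lt_of_limsup_lt (lt_add_of_pos_right _ hε)
    (isBoundedUnder_of ⟨π, fun _ => arccos_le_pi _⟩)

end upperAngle

section FirstVariation

variable {X : Type*} [MetricSpace X] {T : ℝ} {γ η : ℝ → X} {p : X}

theorem dist_sub_div_le_neg_cos_compAngle_add (hγ : IsUnitSpeedGeodesicOn γ T)
    (hη : IsUnitSpeedGeodesicOn η (dist (γ 0) p)) (h0 : η 0 = γ 0)
    (h1 : η (dist (γ 0) p) = p) {t s : ℝ} (ht : t ∈ Ioc 0 T) (hs : s ∈ Ioc 0 (dist (γ 0) p)) :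
    (dist (γ t) p - dist (γ 0) p) / t ≤ -cos (compAngle (γ 0) (γ t) (η s)) + t / (2 * s) := by
  have hγt : dist (γ 0) (γ t) = t := hγ.dist_zero_eq (Ioc_subset_Icc_self ht)
  have hηs : dist (γ 0) (η s) = s := h0 ▸ hη.dist_zero_eq (Ioc_subset_Icc_self hs)
  have hηp : dist (η s) p = dist (γ 0) p - s := by
    simpa only [h1] using hη.dist_eq_sub hs.1.le hs.2 le_rfl
  have hx : γ t ≠ γ 0 := fun h => ht.1.ne' (by rw [← hγt, h, dist_self])
  have hy : η s ≠ γ 0 := fun h => hs.1.ne' (by rw [← hηs, h, dist_self])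
  have hcos := dist_le_of_compAngle hx hy
  rw [hγt, hηs] at hcos
  rw [div_le_iff₀ ht.1]
  calc dist (γ t) p - dist (γ 0) p
      ≤ dist (γ t) (η s) + dist (η s) p - dist (γ 0) p := by linarith [dist_triangle (γ t) (η s) p]
    _ ≤ s - t * cos (compAngle (γ 0) (γ t) (η s)) + t ^ 2 / (2 * s) - s := by linarith
    _ = (-cos (compAngle (γ 0) (γ t) (η s)) + t / (2 * s)) * t := by ring

theorem eventually_dist_sub_div_le_neg_cos_upperAngle_add (hT : 0 < T)
    (hγ : IsUnitSpeedGeodesicOn γ T) (hp : p ≠ γ 0)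
    (hη : IsUnitSpeedGeodesicOn η (dist (γ 0) p)) (h0 : η 0 = γ 0)
    (h1 : η (dist (γ 0) p) = p) {ε : ℝ} (hε : 0 < ε) :
    ∀ᶠ t in 𝓝[>] (0:ℝ), (dist (γ t) p - dist (γ 0) p) / t ≤ -cos (upperAngle γ η) + ε := by
  have hr : 0 < dist (γ 0) p := dist_pos.2 hp.symm
  obtain ⟨Pt, hPt, Ps, hPs, hP⟩ :=
    eventually_prod_iff.1 (eventually_compAngle_lt_upperAngle_add γ η (half_pos hε))
  obtain ⟨s, hPs, hs⟩ := (hPs.and (Ioc_mem_nhdsGT hr)).exists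
  filter_upwards [hPt, Ioc_mem_nhdsGT hT, Ioo_mem_nhdsGT (mul_pos hs.1 hε)] with t hPt htT htε
  have hcos : cos (upperAngle γ η) - ε / 2 ≤ cos (compAngle (γ 0) (γ t) (η s)) :=
    cos_sub_le_cos_of_lt_add (arccos_nonneg _) (upperAngle_le_pi γ η) (half_pos hε).le (hP hPt hPs)
  have hts : t / (2 * s) ≤ ε / 2 := by
    rw [div_le_iff₀ (by linarith [hs.1])]
    linarith [htε.2]
  linarith [dist_sub_div_le_neg_cos_compAngle_add hγ hη h0 h1 htT hs]

theorem limsup_dist_sub_div_le_neg_cos_upperAngle (hT : 0 < T)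
    (hγ : IsUnitSpeedGeodesicOn γ T) (hp : p ≠ γ 0)
    (hη : IsUnitSpeedGeodesicOn η (dist (γ 0) p)) (h0 : η 0 = γ 0)
    (h1 : η (dist (γ 0) p) = p) :
    limsup (fun t : ℝ => (dist (γ t) p - dist (γ 0) p) / t) (𝓝[>] (0:ℝ)) ≤
      -cos (upperAngle γ η) := by
  have hcobdd : IsCoboundedUnder (· ≤ ·) (𝓝[>] (0:ℝ))
      (fun t : ℝ => (dist (γ t) p - dist (γ 0) p) / t) :=
    isCoboundedUnder_le_of_eventually_le _
      (eventually_of_mem (Ioc_mem_nhdsGT hT) fun _ ht => hγ.neg_one_le_dist_sub_div p ht)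
  exact le_of_forall_pos_le_add fun ε hε =>
    limsup_le_of_le hcobdd (eventually_dist_sub_div_le_neg_cos_upperAngle_add hT hγ hp hη h0 h1 hε)

end FirstVariation

/-- Lemma 4.1: upper bound in the first variation formula for the distance
to a point. -/
theorem limsup_dist_quotient_le_neg_cos {X : Type*} [MetricSpace X]
    {T : ℝ} (hT : 0 < T)
    (γ : ℝ → X) (hγ : IsUnitSpeedGeodesicOn γ T)
    (p : X) (hp : p ≠ γ 0)
    (hex : ∃ η : ℝ → X, IsUnitSpeedGeodesicOn η (dist (γ 0) p) ∧
      η 0 = γ 0 ∧ η (dist (γ 0) p) = p) :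
    Filter.limsup (fun t : ℝ => (dist (γ t) p - dist (γ 0) p) / t) (𝓝[>] (0:ℝ))
      ≤ -Real.cos (sInf {a : ℝ | ∃ η : ℝ → X,
          IsUnitSpeedGeodesicOn η (dist (γ 0) p) ∧
          η 0 = γ 0 ∧ η (dist (γ 0) p) = p ∧ a = upperAngle γ η}) := by
  set L := limsup (fun t : ℝ => (dist (γ t) p - dist (γ 0) p) / t) (𝓝[>] (0:ℝ))
  set S := {a : ℝ | ∃ η : ℝ → X, IsUnitSpeedGeodesicOn η (dist (γ 0) p) ∧
    η 0 = γ 0 ∧ η (dist (γ 0) p) = p ∧ a = upperAngle γ η}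
  obtain ⟨η, hη, h0, h1⟩ := hex
  have hS : S.Nonempty := ⟨_, η, hη, h0, h1, rfl⟩
  have hSbdd : BddBelow S := ⟨0, by rintro _ ⟨η, -, -, -, rfl⟩; exact upperAngle_nonneg γ η⟩
  have hSle : S ⊆ {a | L ≤ -cos a} := by
    rintro _ ⟨η, hη, h0, h1, rfl⟩
    exact limsup_dist_sub_div_le_neg_cos_upperAngle hT hγ hp hη h0 h1
  have hclosed : IsClosed {a : ℝ | L ≤ -cos a} := isClosed_le continuous_const continuous_cos.neg
  exact hclosed.closure_subset_iff.2 hSle (csInf_mem_closure hS hSbdd)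
end
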